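/- In the neighbourhood Morse geometry of type (λ, n−λ) with 1 ≤ λ ≤ n−1, the chronological future of any point on the future light cone of the Morse point is contained in the future region: if q ∈ ∂F = {(x,y) ∈ N : |y| = m₂|x|}, then I⁺(q) ⊆ F = {(x,y) ∈ N : |y| > m₂|x|}. -/

import Mathlib

noncomputable section

open Set

/-- Points of `ℝⁿ = ℝ^λ × ℝ^{n−λ}`. -/
abbrev Pt (n lam : ℕ) := EuclideanSpace ℝ (Fin lam) × EuclideanSpace ℝ (Fin (n - lam))

/-- The Euclidean inner product on `ℝⁿ = ℝ^λ × ℝ^{n−λ}`. -/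
def iprod {n lam : ℕ} (v w : Pt n lam) : ℝ :=
  (inner ℝ v.1 w.1 : ℝ) + (inner ℝ v.2 w.2 : ℝ)

/-- The punctured ball `N = {p : 0 < |p| < ε}` (Euclidean norm). -/
def NN (n lam : ℕ) (ε : ℝ) : Set (Pt n lam) :=
  {p | 0 < ‖p.1‖ ^ 2 + ‖p.2‖ ^ 2 ∧ ‖p.1‖ ^ 2 + ‖p.2‖ ^ 2 < ε ^ 2}

/-- The Euclidean gradient of the Morse function `f(x,y) = −|x|² + |y|²`. -/
def gradf {n lam : ℕ} (p : Pt n lam) : Pt n lam :=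
  ((-2 : ℝ) • p.1, (2 : ℝ) • p.2)

/-- The Morse metric with flat auxiliary metric (as a quadratic form):
`g_p(w,w) = |∇f(p)|²⟨w,w⟩ − ζ⟨∇f(p),w⟩²`. -/
def gN (ζ : ℝ) {n lam : ℕ} (p w : Pt n lam) : ℝ :=
  iprod (gradf p) (gradf p) * iprod w w - ζ * iprod (gradf p) w ^ 2

def m1 (ζ : ℝ) : ℝ := (Real.sqrt ζ - 1) / Real.sqrt (ζ - 1)
def m2 (ζ : ℝ) : ℝ := (Real.sqrt ζ + 1) / Real.sqrt (ζ - 1)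

/-- A future-directed timelike curve: a C¹ curve in `N` with everywhere timelike,
future-pointing (`⟨∇f(γ), γ'⟩ > 0`) tangent. -/
def Timelike (ζ ε : ℝ) {n lam : ℕ} (γ γ' : ℝ → Pt n lam) : Prop :=
  (∀ t ∈ Icc (0 : ℝ) 1, HasDerivAt γ (γ' t) t) ∧
  ContinuousOn γ' (Icc (0 : ℝ) 1) ∧
  (∀ t ∈ Icc (0 : ℝ) 1, γ t ∈ NN n lam ε) ∧
  (∀ t ∈ Icc (0 : ℝ) 1, gN ζ (γ t) (γ' t) < 0) ∧
  (∀ t ∈ Icc (0 : ℝ) 1, 0 < iprod (gradf (γ t)) (γ' t))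

/-- The chronology relation `q ≪ p`. -/
def chron (ζ ε : ℝ) {n lam : ℕ} (q p : Pt n lam) : Prop :=
  ∃ γ γ', Timelike ζ ε γ γ' ∧ γ 0 = q ∧ γ 1 = p

def Iplus (ζ ε : ℝ) {n lam : ℕ} (q : Pt n lam) : Set (Pt n lam) :=
  {p ∈ NN n lam ε | chron ζ ε q p}

def Iminus (ζ ε : ℝ) {n lam : ℕ} (q : Pt n lam) : Set (Pt n lam) :=
  {p ∈ NN n lam ε | chron ζ ε p q}

/-- The common past `↓U` (interior in the open set `N` of the set of points
chronologically preceding every point of `U`). -/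
def downSet (ζ ε : ℝ) {n lam : ℕ} (U : Set (Pt n lam)) : Set (Pt n lam) :=
  interior {p ∈ NN n lam ε | ∀ u ∈ U, chron ζ ε p u}

/-- The common future `↑U`. -/
def upSet (ζ ε : ℝ) {n lam : ℕ} (U : Set (Pt n lam)) : Set (Pt n lam) :=
  interior {p ∈ NN n lam ε | ∀ u ∈ U, chron ζ ε u p}

/-! The future light cone `∂F` is the zero set of `Φ(x,y) = |y|² − m₂²|x|²` (`lightConeGap`),
and `Φ` strictly increases along every future-directed timelike curve. Its derivative is
`2(β − m₂²α)` with `α = ⟨x,x'⟩`, `β = ⟨y,y'⟩`; Cauchy–Schwarz turns the timelike condition into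
`α + β < √ζ (β − α)`, which is `(√ζ+1) α < (√ζ−1) β`, i.e. `m₂² α < β` because
`m₂² = (√ζ+1)/(√ζ−1)`. Hence `Φ > 0` on the chronological future of a point where `Φ = 0`. -/

section MorseCone

variable {n lam : ℕ}

lemma iprod_sq_le_iprod_self_mul_iprod_self (v w : Pt n lam) :
    iprod v w ^ 2 ≤ iprod v v * iprod w w := by
  have h₁ := real_inner_mul_inner_self_le v.1 w.1
  have h₂ := real_inner_mul_inner_self_le v.2 w.2
  have hv₁ : 0 ≤ (inner ℝ v.1 v.1 : ℝ) := real_inner_self_nonneg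
  have hv₂ : 0 ≤ (inner ℝ v.2 v.2 : ℝ) := real_inner_self_nonneg
  have hw₁ : 0 ≤ (inner ℝ w.1 w.1 : ℝ) := real_inner_self_nonneg
  have hw₂ : 0 ≤ (inner ℝ w.2 w.2 : ℝ) := real_inner_self_nonneg
  simp only [iprod]
  nlinarith [sq_nonneg ((inner ℝ v.1 v.1 : ℝ) * (inner ℝ w.2 w.2 : ℝ)
      - (inner ℝ v.2 v.2 : ℝ) * (inner ℝ w.1 w.1 : ℝ)),
    mul_nonneg hv₁ hw₂, mul_nonneg hv₂ hw₁,
    mul_le_mul h₁ h₂ (mul_self_nonneg _) (mul_nonneg hv₁ hw₁)]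

lemma iprod_gradf_self (p : Pt n lam) : iprod (gradf p) (gradf p) = 4 * iprod p p := by
  simp only [iprod, gradf, real_inner_smul_left, real_inner_smul_right]
  ring

lemma iprod_gradf (p w : Pt n lam) :
    iprod (gradf p) w = 2 * ((inner ℝ p.2 w.2 : ℝ) - (inner ℝ p.1 w.1 : ℝ)) := by
  simp only [iprod, gradf, real_inner_smul_left]
  ring

lemma m2_sq {ζ : ℝ} (hζ : 1 < ζ) : m2 ζ ^ 2 = (√ζ + 1) / (√ζ - 1) := by
  have hs : 1 < √ζ := by rwa [Real.lt_sqrt zero_le_one, one_pow]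
  have hζs : √ζ ^ 2 = ζ := Real.sq_sqrt (by linarith)
  rw [m2, div_pow, Real.sq_sqrt (by linarith), div_eq_div_iff (by linarith) (by linarith)]
  linear_combination (√ζ + 1) * hζs

lemma m2_sq_mul_inner_lt_of_timelike {ζ : ℝ} (hζ : 1 < ζ) {p w : Pt n lam}
    (htl : gN ζ p w < 0) (hfut : 0 < iprod (gradf p) w) :
    m2 ζ ^ 2 * (inner ℝ p.1 w.1 : ℝ) < (inner ℝ p.2 w.2 : ℝ) := by
  set α : ℝ := inner ℝ p.1 w.1
  set β : ℝ := inner ℝ p.2 w.2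
  have hs : 1 < √ζ := by rwa [Real.lt_sqrt zero_le_one, one_pow]
  rw [iprod_gradf] at hfut
  have hsq : (α + β) ^ 2 < (√ζ * (β - α)) ^ 2 := by
    have hCS : (α + β) ^ 2 ≤ iprod p p * iprod w w :=
      iprod_sq_le_iprod_self_mul_iprod_self p w
    rw [gN, iprod_gradf_self, iprod_gradf] at htl
    rw [mul_pow, Real.sq_sqrt (by linarith)]
    nlinarith
  have hlin : α + β < √ζ * (β - α) :=
    (abs_lt_of_sq_lt_sq hsq (by nlinarith)).trans_le' (le_abs_self _)
  rw [m2_sq hζ, div_mul_eq_mul_div, div_lt_iff₀ (by linarith)]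
  linarith

def lightConeGap (ζ : ℝ) (p : Pt n lam) : ℝ := ‖p.2‖ ^ 2 - m2 ζ ^ 2 * ‖p.1‖ ^ 2

lemma hasDerivAt_lightConeGap (ζ : ℝ) {γ : ℝ → Pt n lam} {v : Pt n lam} {t : ℝ}
    (hγ : HasDerivAt γ v t) :
    HasDerivAt (fun s ↦ lightConeGap ζ (γ s))
      (2 * ((inner ℝ (γ t).2 v.2 : ℝ) - m2 ζ ^ 2 * (inner ℝ (γ t).1 v.1 : ℝ))) t :=
  ((HasDerivAt.norm_sq hγ.snd).sub ((HasDerivAt.norm_sq hγ.fst).const_mul (m2 ζ ^ 2))).congr_deriv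
    (by ring)

lemma Timelike.strictMonoOn_lightConeGap {ζ ε : ℝ} (hζ : 1 < ζ) {γ γ' : ℝ → Pt n lam}
    (h : Timelike ζ ε γ γ') : StrictMonoOn (fun s ↦ lightConeGap ζ (γ s)) (Icc 0 1) := by
  obtain ⟨hder, -, -, htl, hfut⟩ := h
  refine strictMonoOn_of_deriv_pos (convex_Icc 0 1)
    (fun t ht ↦ (hasDerivAt_lightConeGap ζ (hder t ht)).continuousAt.continuousWithinAt)
    fun t ht ↦ ?_
  have ht' : t ∈ Icc (0 : ℝ) 1 := interior_subset ht
  rw [(hasDerivAt_lightConeGap ζ (hder t ht')).deriv]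
  linarith [m2_sq_mul_inner_lt_of_timelike hζ (htl t ht') (hfut t ht')]

lemma lightConeGap_pos_of_chron {ζ ε : ℝ} (hζ : 1 < ζ) {q p : Pt n lam}
    (hqp : chron ζ ε q p) (hq : lightConeGap ζ q = 0) : 0 < lightConeGap ζ p := by
  obtain ⟨γ, γ', hγ, rfl, rfl⟩ := hqp
  simpa [hq] using hγ.strictMonoOn_lightConeGap hζ (left_mem_Icc.2 zero_le_one)
    (right_mem_Icc.2 zero_le_one) zero_lt_one

end MorseCone

theorem stmt12_general (n lam : ℕ) (ζ ε : ℝ) (hζ : 1 < ζ) (q : Pt n lam)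
    (hqdF : ‖q.2‖ = m2 ζ * ‖q.1‖) :
    Iplus ζ ε q ⊆ {p ∈ NN n lam ε | m2 ζ * ‖p.1‖ < ‖p.2‖} := by
  rintro p ⟨hpN, hqp⟩
  refine ⟨hpN, ?_⟩
  have hq : lightConeGap ζ q = 0 := by rw [lightConeGap, hqdF]; ring
  have hp := lightConeGap_pos_of_chron hζ hqp hq
  rw [lightConeGap, ← mul_pow, sub_pos] at hp
  exact lt_of_pow_lt_pow_left₀ 2 (norm_nonneg _) hp

/-- for `1 ≤ λ ≤ n−1`, the chronological future of any point on the
future light cone `∂F = {|y| = m₂|x|}` of the Morse point is contained in the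
future region `F = {|y| > m₂|x|}`. -/
theorem stmt12 (n lam : ℕ) (hn : 2 ≤ n) (hlam1 : 1 ≤ lam) (hlam2 : lam ≤ n - 1)
    (ζ ε : ℝ) (hζ : 1 < ζ) (hε : 0 < ε)
    (q : Pt n lam) (hq : q ∈ NN n lam ε) (hqdF : ‖q.2‖ = m2 ζ * ‖q.1‖) :
    Iplus ζ ε q ⊆ {p ∈ NN n lam ε | m2 ζ * ‖p.1‖ < ‖p.2‖} :=
  stmt12_general n lam ζ ε hζ q hqdF
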